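/- Let u_res = {a ∈ B(H) : a* = −a and [d,a] ∈ S₂(H)} and (u_res)_* = {ρ : ρ* = −ρ, [d,ρ] ∈ S₂(H), p₊ρp₊ ∈ S₁(H₊), p₋ρp₋ ∈ S₁(H₋)}. Then for every a ∈ u_res and ρ ∈ (u_res)_*, the commutator [ρ, a] belongs to (u_res)_*, i.e., (u_res)_* is an ideal-like submodule under the adjoint action of u_res. -/

import Mathlib

open ContinuousLinearMap

noncomputable section

/-- `T` is a Hilbert–Schmidt operator: `∑ᵢ ‖T eᵢ‖² < ∞` for some Hilbert basis `(eᵢ)`. -/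
def IsHS {H : Type*} [NormedAddCommGroup H] [InnerProductSpace ℂ H]
    (T : H →L[ℂ] H) : Prop :=
  ∃ (ι : Type) (b : HilbertBasis ι ℂ H), Summable fun i => ‖T (b i)‖ ^ 2

/-- `T` is trace class: `T` is a product of two Hilbert–Schmidt operators. -/
def IsTC {H : Type*} [NormedAddCommGroup H] [InnerProductSpace ℂ H]
    (T : H →L[ℂ] H) : Prop :=
  ∃ A B : H →L[ℂ] H, IsHS A ∧ IsHS B ∧ T = A * B

/-- The operator `d = i(p₊ - p₋)` associated to the orthogonal projection `P = p₊`
(so `p₋ = 1 - P`). -/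
def dOp {H : Type*} [NormedAddCommGroup H] [InnerProductSpace ℂ H]
    (P : H →L[ℂ] H) : H →L[ℂ] H :=
  Complex.I • (P - (1 - P))

/-! Since `[d, x] = 2i [p₊, x]`, the hypothesis `[d, x] ∈ S₂` says that the off-diagonal blocks
`p₊ x p₋` and `p₋ x p₊` are Hilbert–Schmidt. As `S₂` is a two-sided ideal, the Leibniz rule
`[p₊, [ρ, a]] = [[p₊, ρ], a] + [ρ, [p₊, a]]` keeps `[d, [ρ, a]]` in `S₂`. Each diagonal block of
`[ρ, a]` is `[p ρ p, p a p]` plus products of two off-diagonal blocks, hence trace class, since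
`S₁ = S₂ · S₂` is a two-sided ideal as well; that `S₁` is closed under addition uses two isometries
with orthogonal ranges, which exist because `H` is infinite-dimensional (and `S₁` is everything
otherwise). -/

open scoped InnerProductSpace

section HilbertBasis

variable {𝕜 E F : Type*} [RCLike 𝕜] [NormedAddCommGroup E] [InnerProductSpace 𝕜 E]
  [NormedAddCommGroup F] [InnerProductSpace 𝕜 F]

theorem HilbertBasis.hasSum_norm_inner_sq {ι : Type*} (b : HilbertBasis ι 𝕜 E) (x : E) :
    HasSum (fun i => ‖⟪b i, x⟫_𝕜‖ ^ 2) (‖x‖ ^ 2) := by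
  have h := b.hasSum_inner_mul_inner x x
  rw [inner_self_eq_norm_sq_to_K] at h
  refine (RCLike.hasSum_ofReal 𝕜).mp ?_
  push_cast
  refine h.congr_fun fun i => ?_
  rw [← inner_conj_symm, RCLike.norm_conj, RCLike.mul_conj]

/-- Both sides are the double sum of `‖⟪c j, T (b i)⟫‖ ^ 2`, in the two orders of summation. -/
theorem HilbertBasis.summable_norm_adjoint_apply_sq [CompleteSpace E] [CompleteSpace F]
    {ι κ : Type*} (b : HilbertBasis ι 𝕜 E) (c : HilbertBasis κ 𝕜 F) {T : E →L[𝕜] F}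
    (hT : Summable fun i => ‖T (b i)‖ ^ 2) :
    Summable fun j => ‖adjoint T (c j)‖ ^ 2 := by
  have hf0 : ∀ p : ι × κ, 0 ≤ ‖⟪c p.2, T (b p.1)⟫_𝕜‖ ^ 2 := fun p => sq_nonneg _
  have hf : Summable fun p : ι × κ => ‖⟪c p.2, T (b p.1)⟫_𝕜‖ ^ 2 := by
    refine (summable_prod_of_nonneg hf0).2 ⟨?_, ?_⟩
    · exact fun i => (c.hasSum_norm_inner_sq (T (b i))).summable
    · exact hT.congr fun i => ((c.hasSum_norm_inner_sq (T (b i))).tsum_eq).symm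
  refine ((summable_prod_of_nonneg fun p => hf0 p.swap).1 hf.prod_symm).2.congr fun j => ?_
  rw [← (b.hasSum_norm_inner_sq (adjoint T (c j))).tsum_eq]
  refine tsum_congr fun i => ?_
  rw [adjoint_inner_right, ← norm_inner_symm]
  rfl

theorem Orthonormal.exists_linearIsometry_hasSum [CompleteSpace F] {ι : Type*}
    (b : HilbertBasis ι 𝕜 E) {u : ι → F} (hu : Orthonormal 𝕜 u) :
    ∃ V : E →ₗᵢ[𝕜] F, ∀ x, HasSum (fun i => ⟪b i, x⟫_𝕜 • u i) (V x) :=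
  ⟨hu.orthogonalFamily.linearIsometry.comp b.repr.toLinearIsometry, fun x => by
    simpa [b.repr_apply_apply] using hu.orthogonalFamily.hasSum_linearIsometry (b.repr x)⟩

theorem inner_eq_zero_of_hasSum {ι κ : Type*} {u : ι → E} {v : κ → E}
    (huv : ∀ i j, ⟪u i, v j⟫_𝕜 = 0) {f : ι → 𝕜} {g : κ → 𝕜} {x y : E}
    (hx : HasSum (fun i => f i • u i) x) (hy : HasSum (fun j => g j • v j) y) :
    ⟪x, y⟫_𝕜 = 0 := by
  have hxv : ∀ j, ⟪v j, x⟫_𝕜 = 0 := fun j => by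
    refine (hx.mapL (innerSL 𝕜 (v j))).unique ?_
    simp [← inner_conj_symm (v j), huv]
  refine (hy.mapL (innerSL 𝕜 x)).unique ?_
  simp [← inner_conj_symm x, hxv]

/-- An infinite Hilbert basis can be split into two halves indexed like the whole basis. -/
theorem exists_isometries_orthogonal [CompleteSpace E] (hE : ¬FiniteDimensional 𝕜 E) :
    ∃ V W : E →L[𝕜] E, star V * V = 1 ∧ star W * W = 1 ∧ star V * W = 0 := by
  obtain ⟨s, b, -⟩ := exists_hilbertBasis 𝕜 E
  have : Infinite s := by
    by_contra hs
    have : Fintype s := @Fintype.ofFinite s (not_infinite_iff_finite.mp hs)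
    exact hE (Module.Finite.of_basis b.toOrthonormalBasis.toBasis)
  obtain ⟨e⟩ : Nonempty (s ⊕ s ≃ s) :=
    Cardinal.eq.1 (by rw [← Cardinal.add_def, Cardinal.add_eq_self (Cardinal.aleph0_le_mk s)])
  have hb := b.orthonormal.comp e e.injective
  obtain ⟨V, hV⟩ := (hb.comp Sum.inl Sum.inl_injective).exists_linearIsometry_hasSum b
  obtain ⟨W, hW⟩ := (hb.comp Sum.inr Sum.inr_injective).exists_linearIsometry_hasSum b
  refine ⟨V.toContinuousLinearMap, W.toContinuousLinearMap,
    (isometry_iff_adjoint_comp_self _).1 V.isometry,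
    (isometry_iff_adjoint_comp_self _).1 W.isometry, ?_⟩
  ext x
  refine ext_inner_left 𝕜 fun y => ?_
  rw [mul_apply_eq_comp, zero_apply, inner_zero_right, star_eq_adjoint, adjoint_inner_right]
  exact inner_eq_zero_of_hasSum (fun i j => hb.inner_eq_zero Sum.inl_ne_inr) (hV y) (hW x)

end HilbertBasis

section HilbertSchmidt

variable {H : Type*} [NormedAddCommGroup H] [InnerProductSpace ℂ H]

theorem IsHS.summable [CompleteSpace H] {T : H →L[ℂ] H} (hT : IsHS T) {κ : Type*}
    (c : HilbertBasis κ ℂ H) : Summable fun j => ‖T (c j)‖ ^ 2 := by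
  obtain ⟨ι, b, hb⟩ := hT
  simpa using c.summable_norm_adjoint_apply_sq c (b.summable_norm_adjoint_apply_sq c hb)

theorem IsHS.star [CompleteSpace H] {T : H →L[ℂ] H} (hT : IsHS T) : IsHS (star T) := by
  obtain ⟨ι, b, hb⟩ := hT
  exact ⟨ι, b, b.summable_norm_adjoint_apply_sq b hb⟩

theorem IsHS.mul_left (B : H →L[ℂ] H) {T : H →L[ℂ] H} (hT : IsHS T) : IsHS (B * T) := by
  obtain ⟨ι, b, hb⟩ := hT
  refine ⟨ι, b, (hb.mul_left (‖B‖ ^ 2)).of_nonneg_of_le (fun i => sq_nonneg _) fun i => ?_⟩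
  rw [← mul_pow]
  exact pow_le_pow_left₀ (norm_nonneg _) (B.le_opNorm _) 2

theorem IsHS.mul_right [CompleteSpace H] (B : H →L[ℂ] H) {T : H →L[ℂ] H} (hT : IsHS T) :
    IsHS (T * B) := by
  rw [← star_star (T * B), star_mul]
  exact (hT.star.mul_left _).star

theorem IsHS.smul (z : ℂ) {T : H →L[ℂ] H} (hT : IsHS T) : IsHS (z • T) := by
  simpa using hT.mul_left (z • 1)

theorem IsHS.neg {T : H →L[ℂ] H} (hT : IsHS T) : IsHS (-T) := by
  simpa using hT.smul (-1)

theorem IsHS.commutator_one_sub {p x : H →L[ℂ] H} (hx : IsHS (p * x - x * p)) :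
    IsHS ((1 - p) * x - x * (1 - p)) := by
  have h : (1 - p) * x - x * (1 - p) = -(p * x - x * p) := by noncomm_ring
  exact h ▸ hx.neg

theorem IsHS.add [CompleteSpace H] {S T : H →L[ℂ] H} (hS : IsHS S) (hT : IsHS T) :
    IsHS (S + T) := by
  obtain ⟨ι, b, hb⟩ := hS
  refine ⟨ι, b, ((hb.add (hT.summable b)).mul_left 2).of_nonneg_of_le (fun i => sq_nonneg _)
    fun i => ?_⟩
  calc ‖(S + T) (b i)‖ ^ 2 ≤ (‖S (b i)‖ + ‖T (b i)‖) ^ 2 := by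
        gcongr; exact norm_add_le _ _
    _ ≤ 2 * (‖S (b i)‖ ^ 2 + ‖T (b i)‖ ^ 2) := add_sq_le

theorem IsHS.sub [CompleteSpace H] {S T : H →L[ℂ] H} (hS : IsHS S) (hT : IsHS T) :
    IsHS (S - T) := by
  simpa [sub_eq_add_neg] using hS.add hT.neg

theorem IsTC.mul_left (B : H →L[ℂ] H) {T : H →L[ℂ] H} (hT : IsTC T) : IsTC (B * T) := by
  obtain ⟨A, C, hA, hC, rfl⟩ := hT
  exact ⟨B * A, C, hA.mul_left B, hC, (mul_assoc _ _ _).symm⟩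

theorem IsTC.mul_right [CompleteSpace H] (B : H →L[ℂ] H) {T : H →L[ℂ] H} (hT : IsTC T) :
    IsTC (T * B) := by
  obtain ⟨A, C, hA, hC, rfl⟩ := hT
  exact ⟨A, C * B, hA, hC.mul_right B, mul_assoc _ _ _⟩

theorem IsTC.neg {T : H →L[ℂ] H} (hT : IsTC T) : IsTC (-T) := by
  obtain ⟨A, C, hA, hC, rfl⟩ := hT
  exact ⟨-A, C, hA.neg, hC, (neg_mul _ _).symm⟩

theorem isHS_of_finiteDimensional [FiniteDimensional ℂ H] (T : H →L[ℂ] H) : IsHS T :=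
  ⟨_, (stdOrthonormalBasis ℂ H).toHilbertBasis, (hasSum_fintype _).summable⟩

/-- With isometries `V`, `W` of orthogonal ranges, `A₁ B₁ + A₂ B₂ = (A₁ V* + A₂ W*) (V B₁ + W B₂)`. -/
theorem IsTC.add [CompleteSpace H] {S T : H →L[ℂ] H} (hS : IsTC S) (hT : IsTC T) :
    IsTC (S + T) := by
  by_cases hH : FiniteDimensional ℂ H
  · exact ⟨S + T, 1, isHS_of_finiteDimensional _, isHS_of_finiteDimensional _, (mul_one _).symm⟩
  obtain ⟨V, W, hV, hW, hVW⟩ := exists_isometries_orthogonal hH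
  have hWV : star W * V = 0 := by simpa [star_mul] using congrArg star hVW
  obtain ⟨A₁, B₁, hA₁, hB₁, rfl⟩ := hS
  obtain ⟨A₂, B₂, hA₂, hB₂, rfl⟩ := hT
  refine ⟨A₁ * star V + A₂ * star W, V * B₁ + W * B₂,
    (hA₁.mul_right _).add (hA₂.mul_right _), (hB₁.mul_left _).add (hB₂.mul_left _), ?_⟩
  calc A₁ * B₁ + A₂ * B₂
      = A₁ * (star V * V) * B₁ + A₁ * (star V * W) * B₂
        + A₂ * (star W * V) * B₁ + A₂ * (star W * W) * B₂ := by
        rw [hV, hW, hVW, hWV]; noncomm_ring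
    _ = (A₁ * star V + A₂ * star W) * (V * B₁ + W * B₂) := by noncomm_ring

theorem IsTC.sub [CompleteSpace H] {S T : H →L[ℂ] H} (hS : IsTC S) (hT : IsTC T) :
    IsTC (S - T) := by
  simpa [sub_eq_add_neg] using hS.add hT.neg

end HilbertSchmidt

section Corners

variable {R : Type*} [Ring R] {p : R}

theorem IsIdempotentElem.mul_mul_one_sub (hp : IsIdempotentElem p) (x : R) :
    p * x * (1 - p) = p * (p * x - x * p) * (1 - p) := by
  have hpq : p * (1 - p) = 0 := by rw [mul_sub, mul_one, hp.eq, sub_self]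
  calc p * x * (1 - p) = (p * p) * x * (1 - p) - p * x * (p * (1 - p)) := by
        rw [hp.eq, hpq, mul_zero, sub_zero]
    _ = p * (p * x - x * p) * (1 - p) := by noncomm_ring

theorem IsIdempotentElem.one_sub_mul_mul (hp : IsIdempotentElem p) (x : R) :
    (1 - p) * x * p = -((1 - p) * (p * x - x * p) * p) := by
  have h := hp.one_sub.mul_mul_one_sub x
  rw [sub_sub_cancel] at h
  rw [h]
  noncomm_ring

theorem IsIdempotentElem.mul_mul_mul (hp : IsIdempotentElem p) (x y : R) :
    p * (x * y) * p = p * x * p * (p * y * p) + p * x * (1 - p) * ((1 - p) * y * p) :=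
  calc p * (x * y) * p = p * x * (p * p) * y * p + p * x * ((1 - p) * (1 - p)) * y * p := by
        rw [hp.eq, hp.one_sub.eq]; noncomm_ring
    _ = _ := by noncomm_ring

end Corners

section Commutators

variable {H : Type*} [NormedAddCommGroup H] [InnerProductSpace ℂ H] [CompleteSpace H]
  {p x y : H →L[ℂ] H}

theorem IsHS.commutator_mul_sub_mul (hx : IsHS (p * x - x * p)) (hy : IsHS (p * y - y * p)) :
    IsHS (p * (x * y - y * x) - (x * y - y * x) * p) := by
  have h : p * (x * y - y * x) - (x * y - y * x) * p
      = ((p * x - x * p) * y - y * (p * x - x * p)) + (x * (p * y - y * p) - (p * y - y * p) * x) := by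
    noncomm_ring
  rw [h]
  exact ((hx.mul_right y).sub (hx.mul_left y)).add ((hy.mul_left x).sub (hy.mul_right x))

/-- Of the block products making up the corner, those through `p` contain the trace class factor
`p x p`, and those through `1 - p` are products of two Hilbert–Schmidt off-diagonal blocks. -/
theorem IsTC.corner_mul_sub_mul (hp : IsIdempotentElem p) (hx : IsHS (p * x - x * p))
    (hy : IsHS (p * y - y * p)) (hxp : IsTC (p * x * p)) :
    IsTC (p * (x * y - y * x) * p) := by
  have offDiag : ∀ {z}, IsHS (p * z - z * p) → IsHS (p * z * (1 - p)) ∧ IsHS ((1 - p) * z * p) :=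
    fun hz => ⟨hp.mul_mul_one_sub _ ▸ (hz.mul_left p).mul_right _,
      hp.one_sub_mul_mul _ ▸ ((hz.mul_left _).mul_right p).neg⟩
  rw [mul_sub, sub_mul, hp.mul_mul_mul, hp.mul_mul_mul]
  exact ((hxp.mul_right _).add ⟨_, _, (offDiag hx).1, (offDiag hy).2, rfl⟩).sub
    ((hxp.mul_left _).add ⟨_, _, (offDiag hy).1, (offDiag hx).2, rfl⟩)

end Commutators

theorem dOp_mul_sub_mul_dOp {H : Type*} [NormedAddCommGroup H] [InnerProductSpace ℂ H]
    (P x : H →L[ℂ] H) : dOp P * x - x * dOp P = (2 * Complex.I) • (P * x - x * P) := by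
  simp only [dOp, smul_mul_assoc, mul_smul_comm, sub_mul, mul_sub, one_mul, mul_one]
  module

theorem isHS_dOp_commutator_iff {H : Type*} [NormedAddCommGroup H] [InnerProductSpace ℂ H]
    {P x : H →L[ℂ] H} : IsHS (dOp P * x - x * dOp P) ↔ IsHS (P * x - x * P) := by
  have h2I : (2 * Complex.I) ≠ 0 := by simp
  rw [dOp_mul_sub_mul_dOp]
  refine ⟨fun h => ?_, IsHS.smul _⟩
  have h' := h.smul (2 * Complex.I)⁻¹
  rwa [smul_smul, inv_mul_cancel₀ h2I, one_smul] at h'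

theorem stmt9_general {H : Type*} [NormedAddCommGroup H] [InnerProductSpace ℂ H] [CompleteSpace H]
    (P : H →L[ℂ] H) (hP2 : P * P = P)
    (a ρ : H →L[ℂ] H)
    (ha1 : star a = -a) (ha2 : IsHS (dOp P * a - a * dOp P))
    (hρ1 : star ρ = -ρ) (hρ2 : IsHS (dOp P * ρ - ρ * dOp P))
    (hρ3 : IsTC (P * ρ * P)) (hρ4 : IsTC ((1 - P) * ρ * (1 - P))) :
    star (ρ * a - a * ρ) = -(ρ * a - a * ρ) ∧
    IsHS (dOp P * (ρ * a - a * ρ) - (ρ * a - a * ρ) * dOp P) ∧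
    IsTC (P * (ρ * a - a * ρ) * P) ∧
    IsTC ((1 - P) * (ρ * a - a * ρ) * (1 - P)) := by
  have hPρ : IsHS (P * ρ - ρ * P) := isHS_dOp_commutator_iff.1 hρ2
  have hPa : IsHS (P * a - a * P) := isHS_dOp_commutator_iff.1 ha2
  refine ⟨?_, isHS_dOp_commutator_iff.2 (hPρ.commutator_mul_sub_mul hPa),
    IsTC.corner_mul_sub_mul hP2 hPρ hPa hρ3,
    IsTC.corner_mul_sub_mul (IsIdempotentElem.one_sub hP2) hPρ.commutator_one_sub
      hPa.commutator_one_sub hρ4⟩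
  rw [star_sub, star_mul, star_mul, ha1, hρ1]
  noncomm_ring

/-- The predual `(u_res)_*` is invariant under commutators with elements of `u_res`. -/
theorem stmt9 {H : Type*} [NormedAddCommGroup H] [InnerProductSpace ℂ H] [CompleteSpace H]
    (P : H →L[ℂ] H) (hP : IsSelfAdjoint P) (hP2 : P * P = P)
    (a ρ : H →L[ℂ] H)
    (ha1 : star a = -a) (ha2 : IsHS (dOp P * a - a * dOp P))
    (hρ1 : star ρ = -ρ) (hρ2 : IsHS (dOp P * ρ - ρ * dOp P))
    (hρ3 : IsTC (P * ρ * P)) (hρ4 : IsTC ((1 - P) * ρ * (1 - P))) :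
    star (ρ * a - a * ρ) = -(ρ * a - a * ρ) ∧
    IsHS (dOp P * (ρ * a - a * ρ) - (ρ * a - a * ρ) * dOp P) ∧
    IsTC (P * (ρ * a - a * ρ) * P) ∧
    IsTC ((1 - P) * (ρ * a - a * ρ) * (1 - P)) :=
  stmt9_general P hP2 a ρ ha1 ha2 hρ1 hρ2 hρ3 hρ4
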